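/- arXiv:2004.00744 — 2 statements merged into one kernel-verified Lean document; each statement's English description precedes it below -/
import Mathlib

section
/- Let G be a regular pattern graph on a pattern set 𝓡 and let p be a joint pmf satisfying marginal positivity whose selection odds model factorizes with respect to G, and fix θ : ((j : Fin d) → X_j) → ℝ. Then for every r ∈ 𝓡 with r ≠ 1_d, every ℓ and every ρ ∈ 𝓡, the path expression of the efficient influence function of pattern r equals its ancestor expression: Σ_{Ξ ∈ Π_r} Σ_{s ∈ Ξ, s ≠ 1_d} EIF_{Ξ,s}(ℓ, ρ) = Σ_{s ∈ Ans_r, s ≠ 1_d} m(ℓ, s) · (1{ρ = s} − O_s(ℓ) · 1{ρ ∈ PA(s)}) · Σ_{ζ ∈ Υ_{s,r}} ∏_{w ∈ ζ, w ≠ s} O_w(ℓ). -/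
open Finset

noncomputable section

/-- Response patterns: binary vectors of length `d`, ordered pointwise (`false < true`). -/
abbrev Pat (d : ℕ) := Fin d → Bool

/-- The all-true (fully observed) pattern `1_d`. -/
def allOnes (d : ℕ) : Pat d := fun _ => true

variable {d : ℕ}


instance (r s : Pat d) : Decidable (r ≤ s) :=
  decidable_of_iff (∀ j, r j ≤ s j) (by simp [Pi.le_def])

instance (r s : Pat d) : Decidable (r < s) :=
  decidable_of_iff (r ≤ s ∧ ¬ s ≤ r) lt_iff_le_not_ge.symm

/-- Two full-data values have the same observed part under pattern `r`. -/
def agree {X : Fin d → Type*} (r : Pat d) (ℓ ℓ' : ∀ j, X j) : Prop :=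
  ∀ j, r j = true → ℓ j = ℓ' j

instance {X : Fin d → Type*} [∀ j, DecidableEq (X j)] (r : Pat d) (ℓ ℓ' : ∀ j, X j) :
    Decidable (agree r ℓ ℓ') := by
  unfold agree; infer_instance

variable {X : Fin d → Type*} [∀ j, Fintype (X j)] [∀ j, DecidableEq (X j)]

/-- `p(ℓ, A) = Σ_{s ∈ A} p(ℓ, s)`. -/
def jointA (p : (∀ j, X j) → Pat d → ℝ) (ℓ : ∀ j, X j) (A : Finset (Pat d)) : ℝ :=
  ∑ s ∈ A, p ℓ s

/-- `p_r(ℓ, s) = Σ_{ℓ' ~_r ℓ} p(ℓ', s)` : observed-data mass under pattern `r`. -/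
def obsP (p : (∀ j, X j) → Pat d → ℝ) (r : Pat d) (ℓ : ∀ j, X j) (s : Pat d) : ℝ :=
  ∑ ℓ' ∈ univ.filter (fun ℓ' => agree r ℓ ℓ'), p ℓ' s

/-- `p_r(ℓ, A) = Σ_{s ∈ A} p_r(ℓ, s)`. -/
def obsPA (p : (∀ j, X j) → Pat d → ℝ) (r : Pat d) (ℓ : ∀ j, X j) (A : Finset (Pat d)) : ℝ :=
  ∑ s ∈ A, obsP p r ℓ s

/-- `p` is a joint pmf on (full data) × (pattern set `𝓡`): nonnegative with total sum 1. -/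
def IsJointPMF (𝓡 : Finset (Pat d)) (p : (∀ j, X j) → Pat d → ℝ) : Prop :=
  (∀ ℓ, ∀ r ∈ 𝓡, 0 ≤ p ℓ r) ∧ (∑ ℓ : ∀ j, X j, ∑ r ∈ 𝓡, p ℓ r) = 1

/-- Marginal positivity: `p_r(ℓ, r) > 0` for every `ℓ` and every `r ∈ 𝓡`. -/
def MargPos (𝓡 : Finset (Pat d)) (p : (∀ j, X j) → Pat d → ℝ) : Prop :=
  ∀ ℓ, ∀ r ∈ 𝓡, 0 < obsP p r ℓ r

/-- Full positivity: `p(ℓ, r) > 0` for every `ℓ` and every `r ∈ 𝓡`. -/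
def FullPos (𝓡 : Finset (Pat d)) (p : (∀ j, X j) → Pat d → ℝ) : Prop :=
  ∀ ℓ, ∀ r ∈ 𝓡, 0 < p ℓ r

/-- Selection odds `O_r(ℓ) = p_r(ℓ, r) / p_r(ℓ, PA(r))`. -/
def odds (p : (∀ j, X j) → Pat d → ℝ) (PA : Pat d → Finset (Pat d)) (r : Pat d)
    (ℓ : ∀ j, X j) : ℝ :=
  obsP p r ℓ r / obsPA p r ℓ (PA r)

/-- A regular pattern graph on `𝓡`: `1_d` is a source, and every other pattern in `𝓡`
has a nonempty parent set inside `𝓡` consisting of strictly larger patterns. -/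
def IsRegularGraph (𝓡 : Finset (Pat d)) (PA : Pat d → Finset (Pat d)) : Prop :=
  PA (allOnes d) = ∅ ∧
    ∀ r ∈ 𝓡, r ≠ allOnes d → (PA r).Nonempty ∧ PA r ⊆ 𝓡 ∧ ∀ s ∈ PA r, r < s

/-- The selection odds model of `p` factorizes with respect to the pattern graph. -/
def SelOddsFactorizes (𝓡 : Finset (Pat d)) (PA : Pat d → Finset (Pat d))
    (p : (∀ j, X j) → Pat d → ℝ) : Prop :=
  ∀ r ∈ 𝓡, r ≠ allOnes d → ∀ ℓ, p ℓ r = jointA p ℓ (PA r) * odds p PA r ℓ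

/-- The pattern mixture model of `p` factorizes with respect to the pattern graph. -/
def PMMFactorizes (𝓡 : Finset (Pat d)) (PA : Pat d → Finset (Pat d))
    (p : (∀ j, X j) → Pat d → ℝ) : Prop :=
  ∀ r ∈ 𝓡, r ≠ allOnes d → ∀ ℓ,
    p ℓ r * obsPA p r ℓ (PA r) = jointA p ℓ (PA r) * obsP p r ℓ r

/-- A path from `u` to `v` in the pattern graph: a nonempty sequence
`u = r_0, r_1, …, r_m = v` of patterns in `𝓡` with `r_i ∈ PA(r_{i+1})`. -/
def IsPath (𝓡 : Finset (Pat d)) (PA : Pat d → Finset (Pat d)) (u v : Pat d)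
    (Ξ : List (Pat d)) : Prop :=
  Ξ ≠ [] ∧ Ξ.head? = some u ∧ Ξ.getLast? = some v ∧ (∀ q ∈ Ξ, q ∈ 𝓡) ∧
    Ξ.Chain' (fun a b => a ∈ PA b)

/-!
Write `κ(s) = 1{ρ = s} − O_s(ℓ)·1{ρ ∈ PA(s)}`. Splitting every path into `r` at its last edge
`t → r`, both sides of the identity, as functions of `r`, satisfy
`F(r) = m(ℓ, r)·κ(r) + O_r(ℓ)·Σ_{t ∈ PA(r)} F(t)` and vanish at `1_d`. For the ancestor
expression this is the recurrence of the path sums `Σ_{ζ ∈ Υ_{s,r}} ∏_{w ≠ s} O_w`. For the path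
expression, appending `r` multiplies every earlier term by `O_r(ℓ)` and adds the term of `r`
itself, whose numerator, summed over all paths into the parents of `r`, collapses to `m(ℓ, r)`
by the path-sum identity `p(ℓ', 1_d)·Σ_{Ξ ∈ Π_t} ∏_{τ ≠ 1_d} O_τ(ℓ') = p(ℓ', t)`, itself
the factorization applied along paths. Parents are strictly larger patterns, so induction down
the finite poset of patterns closes the argument.
-/

section PatternGraph

variable {𝓡 : Finset (Pat d)} {PA : Pat d → Finset (Pat d)}

theorem IsRegularGraph.lt_of_mem_parents (hG : IsRegularGraph 𝓡 PA) {r t : Pat d}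
    (hr : r ∈ 𝓡) (ht : t ∈ PA r) : r < t := by
  by_cases h1 : r = allOnes d
  · rw [h1, hG.1] at ht
    exact absurd ht (notMem_empty t)
  · exact (hG.2 r hr h1).2.2 t ht

theorem IsRegularGraph.mem_of_mem_parents (hG : IsRegularGraph 𝓡 PA) {r t : Pat d}
    (hr : r ∈ 𝓡) (ht : t ∈ PA r) : t ∈ 𝓡 := by
  by_cases h1 : r = allOnes d
  · rw [h1, hG.1] at ht
    exact absurd ht (notMem_empty t)
  · exact (hG.2 r hr h1).2.1 ht

theorem IsRegularGraph.induction (hG : IsRegularGraph 𝓡 PA) {P : Pat d → Prop}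
    (top : P (allOnes d)) (step : ∀ r ∈ 𝓡, r ≠ allOnes d → (∀ t ∈ PA r, P t) → P r) :
    ∀ r ∈ 𝓡, P r := by
  intro r
  induction r using WellFoundedGT.induction with
  | _ r ih =>
    intro hr
    by_cases h1 : r = allOnes d
    · exact h1 ▸ top
    · exact step r hr h1 fun t ht =>
        ih t (hG.lt_of_mem_parents hr ht) (hG.mem_of_mem_parents hr ht)

theorem isPath_singleton_iff {u v w : Pat d} :
    IsPath 𝓡 PA u v [w] ↔ u = w ∧ v = w ∧ w ∈ 𝓡 := by
  simp only [IsPath, ne_eq, List.cons_ne_nil, not_false_eq_true, List.head?_cons,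
    Option.some.injEq, List.getLast?_singleton, List.mem_singleton, forall_eq, true_and]
  exact ⟨fun ⟨hu, hv, hw, _⟩ => ⟨hu.symm, hv.symm, hw⟩,
    fun ⟨hu, hv, hw⟩ => ⟨hu.symm, hv.symm, hw, List.isChain_singleton w⟩⟩

theorem isPath_append_singleton_iff {u v r : Pat d} {ζ : List (Pat d)} (hζ : ζ ≠ []) :
    IsPath 𝓡 PA u v (ζ ++ [r]) ↔ v = r ∧ r ∈ 𝓡 ∧ ∃ t ∈ PA r, IsPath 𝓡 PA u t ζ := by
  have hchain : (ζ ++ [r]).IsChain (fun a b => a ∈ PA b) ↔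
      ζ.IsChain (fun a b => a ∈ PA b) ∧ ζ.getLast hζ ∈ PA r := by
    simp [List.isChain_append, List.getLast?_eq_some_getLast hζ]
  simp only [IsPath, ne_eq, List.append_eq_nil_iff, List.cons_ne_nil, and_false,
    not_false_eq_true, List.head?_append_of_ne_nil _ hζ, List.getLast?_concat, Option.some.injEq,
    List.mem_append, List.mem_singleton, or_imp, forall_and, forall_eq, true_and]
  constructor
  · rintro ⟨hu, rfl, ⟨hmem, hr⟩, hch⟩
    obtain ⟨hch, hlast⟩ := hchain.1 hch
    exact ⟨rfl, hr, _, hlast, hζ, hu, List.getLast?_eq_some_getLast hζ, hmem, hch⟩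
  · rintro ⟨rfl, hr, t, ht, -, hu, hlast, hmem, hch⟩
    rw [List.getLast?_eq_some_getLast hζ, Option.some.injEq] at hlast
    exact ⟨hu, rfl, ⟨hmem, hr⟩, hchain.2 ⟨hch, hlast ▸ ht⟩⟩

theorem IsPath.le_of_mem (hG : IsRegularGraph 𝓡 PA) {u v q : Pat d} {Ξ : List (Pat d)}
    (h : IsPath 𝓡 PA u v Ξ) (hq : q ∈ Ξ) : v ≤ q := by
  induction Ξ using List.reverseRecOn generalizing v with
  | nil => exact absurd rfl h.1
  | append_singleton L b ih =>
    rcases eq_or_ne L [] with rfl | hL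
    · obtain ⟨-, rfl, -⟩ := isPath_singleton_iff.1 h
      exact (List.mem_singleton.1 hq).ge
    obtain ⟨rfl, hv, t, ht, hpath⟩ := (isPath_append_singleton_iff hL).1 h
    rcases List.mem_append.1 hq with hq | hq
    · exact (hG.lt_of_mem_parents hv ht).le.trans (ih hpath hq)
    · exact (List.mem_singleton.1 hq).ge

theorem IsPath.le (hG : IsRegularGraph 𝓡 PA) {u v : Pat d} {Ξ : List (Pat d)}
    (h : IsPath 𝓡 PA u v Ξ) : v ≤ u :=
  h.le_of_mem hG (List.mem_of_mem_head? h.2.1)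

variable {Υ : Pat d → Pat d → Finset (List (Pat d))}

theorem paths_self (hG : IsRegularGraph 𝓡 PA)
    (hΥ : ∀ u v, ∀ Ξ, Ξ ∈ Υ u v ↔ IsPath 𝓡 PA u v Ξ) {r : Pat d} (hr : r ∈ 𝓡) :
    Υ r r = {[r]} := by
  ext Ξ
  rw [hΥ, mem_singleton]
  constructor
  · intro h
    obtain ⟨L, b, rfl⟩ := (List.eq_nil_or_concat' Ξ).resolve_left h.1
    rcases eq_or_ne L [] with rfl | hL
    · rw [(isPath_singleton_iff.1 h).1]; rfl
    obtain ⟨rfl, -, t, ht, hpath⟩ := (isPath_append_singleton_iff hL).1 h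
    exact absurd (hpath.le hG) (hG.lt_of_mem_parents hr ht).not_ge
  · rintro rfl
    exact isPath_singleton_iff.2 ⟨rfl, rfl, hr⟩

theorem paths_eq_empty (hG : IsRegularGraph 𝓡 PA)
    (hΥ : ∀ u v, ∀ Ξ, Ξ ∈ Υ u v ↔ IsPath 𝓡 PA u v Ξ) {s t : Pat d} (h : s < t) :
    Υ s t = ∅ :=
  eq_empty_of_forall_notMem fun _ hΞ => ((hΥ _ _ _).1 hΞ |>.le hG).not_gt h

theorem sum_paths_eq_sum_parents {M : Type*} [AddCommMonoid M]
    (hΥ : ∀ u v, ∀ Ξ, Ξ ∈ Υ u v ↔ IsPath 𝓡 PA u v Ξ) {s r : Pat d} (hr : r ∈ 𝓡)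
    (hsr : s ≠ r) (f : List (Pat d) → M) :
    ∑ Ξ ∈ Υ s r, f Ξ = ∑ t ∈ PA r, ∑ ζ ∈ Υ s t, f (ζ ++ [r]) := by
  rw [sum_sigma']
  symm
  refine sum_bij (fun x _ => x.2 ++ [r]) ?_ ?_ ?_ (fun _ _ => rfl)
  · rintro ⟨t, ζ⟩ hx
    obtain ⟨ht, hζ⟩ := mem_sigma.1 hx
    rw [hΥ] at hζ ⊢
    exact (isPath_append_singleton_iff hζ.1).2 ⟨rfl, hr, t, ht, hζ⟩
  · rintro ⟨t, ζ⟩ hx ⟨t', ζ'⟩ hx' heq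
    obtain rfl : ζ = ζ' := List.append_cancel_right heq
    have hlast := ((hΥ _ _ _).1 (mem_sigma.1 hx).2).2.2.1
    rw [((hΥ _ _ _).1 (mem_sigma.1 hx').2).2.2.1, Option.some.injEq] at hlast
    simp only at hlast
    rw [hlast]
  · intro Ξ hΞ
    rw [hΥ] at hΞ
    obtain ⟨L, b, rfl⟩ := (List.eq_nil_or_concat' Ξ).resolve_left hΞ.1
    rcases eq_or_ne L [] with rfl | hL
    · obtain ⟨rfl, rfl, -⟩ := isPath_singleton_iff.1 hΞ
      exact absurd rfl hsr
    obtain ⟨rfl, -, t, ht, hpath⟩ := (isPath_append_singleton_iff hL).1 hΞ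
    exact ⟨⟨t, L⟩, mem_sigma.2 ⟨ht, (hΥ _ _ _).2 hpath⟩, rfl⟩

variable {R : Type*} [CommSemiring R]

def pathOddsSum (Υ : Pat d → Pat d → Finset (List (Pat d))) (O : Pat d → R) (s r : Pat d) : R :=
  ∑ ζ ∈ Υ s r, (ζ.map fun w => if w = s then 1 else O w).prod

theorem pathOddsSum_eq (hG : IsRegularGraph 𝓡 PA)
    (hΥ : ∀ u v, ∀ Ξ, Ξ ∈ Υ u v ↔ IsPath 𝓡 PA u v Ξ) (O : Pat d → R) (s : Pat d)
    {r : Pat d} (hr : r ∈ 𝓡) :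
    pathOddsSum Υ O s r = (if s = r then 1 else 0) + O r * ∑ t ∈ PA r, pathOddsSum Υ O s t := by
  by_cases hsr : s = r
  · subst hsr
    have hno : ∀ t ∈ PA s, pathOddsSum Υ O s t = 0 := fun t ht => by
      rw [pathOddsSum, paths_eq_empty hG hΥ (hG.lt_of_mem_parents hr ht), sum_empty]
    rw [sum_eq_zero hno, mul_zero, add_zero, if_pos rfl, pathOddsSum, paths_self hG hΥ hr]
    simp
  · rw [pathOddsSum, sum_paths_eq_sum_parents hΥ hr hsr, if_neg hsr, zero_add, mul_sum]
    refine sum_congr rfl fun t _ => ?_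
    rw [pathOddsSum, mul_sum]
    refine sum_congr rfl fun ζ _ => ?_
    simp [Ne.symm hsr, mul_comm]

theorem sum_mul_pathOddsSum_eq (hG : IsRegularGraph 𝓡 PA)
    (hΥ : ∀ u v, ∀ Ξ, Ξ ∈ Υ u v ↔ IsPath 𝓡 PA u v Ξ) (O c : Pat d → R) {S : Finset (Pat d)}
    {r : Pat d} (hrS : r ∈ S) (hr : r ∈ 𝓡) :
    ∑ s ∈ S, c s * pathOddsSum Υ O s r
      = c r + O r * ∑ t ∈ PA r, ∑ s ∈ S, c s * pathOddsSum Υ O s t := by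
  simp_rw [pathOddsSum_eq hG hΥ O _ hr, mul_add, sum_add_distrib, mul_ite, mul_one, mul_zero,
    sum_ite_eq', if_pos hrS, mul_sum]
  rw [sum_comm]
  simp only [mul_left_comm]

end PatternGraph

section SelectionOdds

variable {𝓡 : Finset (Pat d)} {PA : Pat d → Finset (Pat d)} {p : (∀ j, X j) → Pat d → ℝ}

theorem obsP_congr {r : Pat d} {ℓ ℓ' : ∀ j, X j}
    (h : agree r ℓ ℓ') (s : Pat d) : obsP p r ℓ' s = obsP p r ℓ s := by
  unfold obsP
  congr 1
  exact filter_congr fun x _ =>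
    ⟨fun hx j hj => (h j hj).trans (hx j hj), fun hx j hj => (h j hj).symm.trans (hx j hj)⟩

theorem odds_congr {r : Pat d} {ℓ ℓ' : ∀ j, X j} (h : agree r ℓ ℓ') :
    odds p PA r ℓ' = odds p PA r ℓ := by
  simp only [odds, obsPA, obsP_congr h]

theorem sum_agree_mul_eq_odds_mul (hfact : SelOddsFactorizes 𝓡 PA p) {r : Pat d} (hr : r ∈ 𝓡)
    (hr1 : r ≠ allOnes d) (f : (∀ j, X j) → ℝ) (ℓ : ∀ j, X j) :
    ∑ ℓ' ∈ univ.filter (fun ℓ' => agree r ℓ ℓ'), f ℓ' * p ℓ' r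
      = odds p PA r ℓ * ∑ ℓ' ∈ univ.filter (fun ℓ' => agree r ℓ ℓ'), f ℓ' * jointA p ℓ' (PA r) := by
  rw [mul_sum]
  refine sum_congr rfl fun ℓ' hℓ' => ?_
  rw [hfact r hr hr1, odds_congr (mem_filter.1 hℓ').2]
  ring

theorem obsP_self_eq_odds_mul (hfact : SelOddsFactorizes 𝓡 PA p) {r : Pat d} (hr : r ∈ 𝓡)
    (hr1 : r ≠ allOnes d) (ℓ : ∀ j, X j) :
    obsP p r ℓ r = odds p PA r ℓ * obsPA p r ℓ (PA r) := by
  have h := sum_agree_mul_eq_odds_mul hfact hr hr1 1 ℓ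
  simp only [Pi.one_apply, one_mul] at h
  rw [obsP, h, obsPA]
  unfold obsP jointA
  rw [sum_comm]

theorem odds_ne_zero (hpos : MargPos 𝓡 p) (hfact : SelOddsFactorizes 𝓡 PA p) {r : Pat d}
    (hr : r ∈ 𝓡) (hr1 : r ≠ allOnes d) (ℓ : ∀ j, X j) : odds p PA r ℓ ≠ 0 :=
  left_ne_zero_of_mul (obsP_self_eq_odds_mul hfact hr hr1 ℓ ▸ (hpos ℓ r hr).ne')

/-- The paper's `m(ℓ, s)`. -/
def condMean (p : (∀ j, X j) → Pat d → ℝ) (θ : (∀ j, X j) → ℝ) (ℓ : ∀ j, X j) (s : Pat d) : ℝ :=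
  (∑ ℓ' ∈ univ.filter (fun ℓ' => agree s ℓ ℓ'), θ ℓ' * p ℓ' s) / obsP p s ℓ s

theorem condMean_eq_div_obsPA (hpos : MargPos 𝓡 p) (hfact : SelOddsFactorizes 𝓡 PA p)
    (θ : (∀ j, X j) → ℝ) {r : Pat d} (hr : r ∈ 𝓡) (hr1 : r ≠ allOnes d) (ℓ : ∀ j, X j) :
    condMean p θ ℓ r = (∑ ℓ' ∈ univ.filter (fun ℓ' => agree r ℓ ℓ'), θ ℓ' * jointA p ℓ' (PA r))
      / obsPA p r ℓ (PA r) := by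
  rw [condMean, sum_agree_mul_eq_odds_mul hfact hr hr1, obsP_self_eq_odds_mul hfact hr hr1,
    mul_div_mul_left _ _ (odds_ne_zero hpos hfact hr hr1 ℓ)]

variable {Υ : Pat d → Pat d → Finset (List (Pat d))}

theorem mul_pathOddsSum_allOnes (h𝓡 : allOnes d ∈ 𝓡) (hG : IsRegularGraph 𝓡 PA)
    (hΥ : ∀ u v, ∀ Ξ, Ξ ∈ Υ u v ↔ IsPath 𝓡 PA u v Ξ) (hfact : SelOddsFactorizes 𝓡 PA p)
    (ℓ : ∀ j, X j) :
    ∀ r ∈ 𝓡, p ℓ (allOnes d) * pathOddsSum Υ (odds p PA · ℓ) (allOnes d) r = p ℓ r := by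
  refine hG.induction ?_ fun r hr hr1 ih => ?_
  · rw [pathOddsSum_eq hG hΥ _ _ h𝓡, hG.1]
    simp
  · rw [pathOddsSum_eq hG hΥ _ _ hr, if_neg (Ne.symm hr1), zero_add, mul_left_comm, mul_sum,
      sum_congr rfl ih, hfact r hr hr1, mul_comm]
    rfl

/-- The paper's `μ_{Ξ,s}(ℓ)`. -/
def pathMean (p : (∀ j, X j) → Pat d → ℝ) (PA : Pat d → Finset (Pat d)) (θ : (∀ j, X j) → ℝ)
    (ℓ : ∀ j, X j) (Ξ : List (Pat d)) (s : Pat d) : ℝ :=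
  (∑ ℓ' ∈ univ.filter (fun ℓ' => agree s ℓ ℓ'), θ ℓ' * p ℓ' (allOnes d) *
      (Ξ.map fun τ => if s < τ ∧ τ ≠ allOnes d then odds p PA τ ℓ' else 1).prod)
    / obsPA p s ℓ (PA s)

/-- `Σ_{s ∈ Ξ, s ≠ 1_d} EIF_{Ξ,s}(ℓ, ρ)`, with the factor `1{ρ = s} − O_s(ℓ)·1{ρ ∈ PA(s)}`
generalized to a weight `κ s`. -/
def eifPath (p : (∀ j, X j) → Pat d → ℝ) (PA : Pat d → Finset (Pat d)) (θ : (∀ j, X j) → ℝ)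
    (ℓ : ∀ j, X j) (κ : Pat d → ℝ) (Ξ : List (Pat d)) : ℝ :=
  (Ξ.map fun s => if s = allOnes d then 0 else
    pathMean p PA θ ℓ Ξ s * κ s * (Ξ.map fun w => if w < s then odds p PA w ℓ else 1).prod).sum

theorem eifPath_append_singleton (θ : (∀ j, X j) → ℝ) (ℓ : ∀ j, X j) (κ : Pat d → ℝ)
    {r : Pat d} (hr1 : r ≠ allOnes d) {ζ : List (Pat d)} (hζ : ∀ q ∈ ζ, r < q) :
    eifPath p PA θ ℓ κ (ζ ++ [r]) = odds p PA r ℓ * eifPath p PA θ ℓ κ ζ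
      + (∑ ℓ' ∈ univ.filter (fun ℓ' => agree r ℓ ℓ'), θ ℓ' *
          (p ℓ' (allOnes d) * (ζ.map fun w => if w = allOnes d then 1 else odds p PA w ℓ').prod))
        / obsPA p r ℓ (PA r) * κ r := by
  have hmean : ∀ s ∈ ζ, pathMean p PA θ ℓ (ζ ++ [r]) s = pathMean p PA θ ℓ ζ s := fun s hs => by
    simp [pathMean, (hζ s hs).not_gt]
  have hmean_r : pathMean p PA θ ℓ (ζ ++ [r]) r = (∑ ℓ' ∈ univ.filter (fun ℓ' => agree r ℓ ℓ'),
      θ ℓ' * (p ℓ' (allOnes d) * (ζ.map fun w => if w = allOnes d then 1 else odds p PA w ℓ').prod))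
        / obsPA p r ℓ (PA r) := by
    simp only [pathMean, List.map_append, List.prod_append, List.map_singleton,
      List.prod_singleton, lt_irrefl, false_and, if_false, mul_one, ← mul_assoc]
    congr 1
    refine sum_congr rfl fun ℓ' _ => ?_
    congr 2
    refine List.map_congr_left fun τ hτ => ?_
    by_cases h1 : τ = allOnes d <;> simp [h1, hζ τ hτ]
  have hsuffix_r : ((ζ ++ [r]).map fun w => if w < r then odds p PA w ℓ else 1).prod = 1 := by
    refine List.prod_eq_one fun x hx => ?_
    obtain ⟨w, hw, rfl⟩ := List.mem_map.1 hx
    rcases List.mem_append.1 hw with hw | hw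
    · exact if_neg (hζ w hw).not_gt
    · exact if_neg (List.mem_singleton.1 hw).ge.not_gt
  unfold eifPath
  rw [List.map_append, List.sum_append, List.map_singleton, List.sum_singleton, if_neg hr1,
    hmean_r, hsuffix_r, mul_one, ← List.sum_map_mul_left]
  congr 1
  refine congrArg List.sum (List.map_congr_left fun s hs => ?_)
  split_ifs
  · rw [mul_zero]
  · simp only [hmean s hs, List.map_append, List.prod_append, List.map_singleton,
      List.prod_singleton, if_pos (hζ s hs)]
    ring

theorem sum_eifPath_eq_condMean_mul_add (h𝓡 : allOnes d ∈ 𝓡) (hG : IsRegularGraph 𝓡 PA)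
    (hΥ : ∀ u v, ∀ Ξ, Ξ ∈ Υ u v ↔ IsPath 𝓡 PA u v Ξ) (hpos : MargPos 𝓡 p)
    (hfact : SelOddsFactorizes 𝓡 PA p) (θ : (∀ j, X j) → ℝ) (ℓ : ∀ j, X j) (κ : Pat d → ℝ)
    {r : Pat d} (hr : r ∈ 𝓡) (hr1 : r ≠ allOnes d) :
    ∑ Ξ ∈ Υ (allOnes d) r, eifPath p PA θ ℓ κ Ξ
      = condMean p θ ℓ r * κ r
        + odds p PA r ℓ * ∑ t ∈ PA r, ∑ Ξ ∈ Υ (allOnes d) t, eifPath p PA θ ℓ κ Ξ := by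
  have hbelow : ∀ t ∈ PA r, ∀ ζ ∈ Υ (allOnes d) t, ∀ q ∈ ζ, r < q := fun t ht ζ hζ q hq =>
    (hG.lt_of_mem_parents hr ht).trans_le (((hΥ _ _ _).1 hζ).le_of_mem hG hq)
  have hmass : ∑ t ∈ PA r, ∑ ζ ∈ Υ (allOnes d) t, ∑ ℓ' ∈ univ.filter (fun ℓ' => agree r ℓ ℓ'),
      θ ℓ' * (p ℓ' (allOnes d) *
        (ζ.map fun w => if w = allOnes d then 1 else odds p PA w ℓ').prod)
      = ∑ ℓ' ∈ univ.filter (fun ℓ' => agree r ℓ ℓ'), θ ℓ' * jointA p ℓ' (PA r) := by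
    rw [sum_congr rfl fun t _ => sum_comm, sum_comm]
    refine sum_congr rfl fun ℓ' _ => ?_
    rw [jointA, mul_sum]
    refine sum_congr rfl fun t ht => ?_
    rw [← mul_pathOddsSum_allOnes h𝓡 hG hΥ hfact ℓ' t (hG.mem_of_mem_parents hr ht), pathOddsSum,
      mul_sum, mul_sum]
  rw [sum_paths_eq_sum_parents hΥ hr (Ne.symm hr1)]
  rw [sum_congr rfl fun t ht => sum_congr rfl fun ζ hζ =>
    eifPath_append_singleton θ ℓ κ hr1 (hbelow t ht ζ hζ)]
  simp only [sum_add_distrib, ← mul_sum, ← sum_mul, ← sum_div]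
  rw [hmass, condMean_eq_div_obsPA hpos hfact θ hr hr1, add_comm]

end SelectionOdds

theorem eif_path_eq_ancestor_expression_general
    (𝓡 : Finset (Pat d)) (h𝓡 : allOnes d ∈ 𝓡)
    (PA : Pat d → Finset (Pat d)) (hG : IsRegularGraph 𝓡 PA)
    (p : (∀ j, X j) → Pat d → ℝ)
    (hpos : MargPos 𝓡 p)
    (hfact : SelOddsFactorizes 𝓡 PA p)
    (θ : (∀ j, X j) → ℝ)
    (Υ : Pat d → Pat d → Finset (List (Pat d)))
    (hΥ : ∀ u v, ∀ Ξ, Ξ ∈ Υ u v ↔ IsPath 𝓡 PA u v Ξ) :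
    ∀ r ∈ 𝓡, r ≠ allOnes d → ∀ (ℓ : ∀ j, X j), ∀ ρ ∈ 𝓡,
      (∑ Ξ ∈ Υ (allOnes d) r,
        (Ξ.map fun s => if s = allOnes d then (0:ℝ) else
          ((∑ ℓ' ∈ univ.filter (fun ℓ' => agree s ℓ ℓ'),
              θ ℓ' * p ℓ' (allOnes d) *
                (Ξ.map fun τ => if s < τ ∧ τ ≠ allOnes d then odds p PA τ ℓ' else 1).prod)
            / obsPA p s ℓ (PA s))
          * ((if ρ = s then (1:ℝ) else 0)
              - odds p PA s ℓ * (if ρ ∈ PA s then (1:ℝ) else 0))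
          * (Ξ.map fun w => if w < s then odds p PA w ℓ else 1).prod).sum)
      = ∑ s ∈ (𝓡.filter fun s => (Υ s r).Nonempty).erase (allOnes d),
          ((∑ ℓ' ∈ univ.filter (fun ℓ' => agree s ℓ ℓ'), θ ℓ' * p ℓ' s) / obsP p s ℓ s)
          * ((if ρ = s then (1:ℝ) else 0)
              - odds p PA s ℓ * (if ρ ∈ PA s then (1:ℝ) else 0))
          * ∑ ζ ∈ Υ s r,
              (ζ.map fun w => if w = s then (1:ℝ) else odds p PA w ℓ).prod := by
  intro r hr _ ℓ ρ _
  set κ : Pat d → ℝ := fun s =>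
    (if ρ = s then 1 else 0) - odds p PA s ℓ * (if ρ ∈ PA s then 1 else 0)
  have hrec : ∀ r ∈ 𝓡, ∑ Ξ ∈ Υ (allOnes d) r, eifPath p PA θ ℓ κ Ξ
      = ∑ s ∈ 𝓡.erase (allOnes d), condMean p θ ℓ s * κ s * pathOddsSum Υ (odds p PA · ℓ) s r := by
    refine hG.induction ?_ fun r hr hr1 ih => ?_
    · have hempty : eifPath p PA θ ℓ κ [allOnes d] = 0 := by simp [eifPath]
      rw [paths_self hG hΥ h𝓡, sum_singleton, hempty, eq_comm]
      refine sum_eq_zero fun s hs => ?_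
      rw [pathOddsSum_eq hG hΥ _ _ h𝓡, hG.1, if_neg (mem_erase.1 hs).1]
      simp
    · rw [sum_eifPath_eq_condMean_mul_add h𝓡 hG hΥ hpos hfact θ ℓ κ hr hr1,
        sum_mul_pathOddsSum_eq hG hΥ _ _ (mem_erase.2 ⟨hr1, hr⟩) hr, sum_congr rfl ih]
  refine (hrec r hr).trans (sum_subset (erase_subset_erase _ (filter_subset _ _))
    fun s hs hs' => ?_).symm
  obtain ⟨hs1, hs𝓡⟩ := mem_erase.1 hs
  have hno : Υ s r = ∅ := not_nonempty_iff_eq_empty.1 fun hne =>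
    hs' (mem_erase.2 ⟨hs1, mem_filter.2 ⟨hs𝓡, hne⟩⟩)
  rw [pathOddsSum, hno, sum_empty, mul_zero]

/-- **Proposition (path expression = ancestor expression of the EIF).** For every pattern
`r ≠ 1_d`, the path expression `Σ_{Ξ∈Π_r} Σ_{s∈Ξ, s≠1_d} EIF_{Ξ,s}(ℓ, ρ)` of the efficient
influence function of pattern `r` equals its ancestor expression
`Σ_{s∈Ans_r, s≠1_d} m(ℓ,s)·(1{ρ=s} − O_s(ℓ)·1{ρ∈PA(s)})·Σ_{ζ∈Υ_{s,r}} ∏_{w∈ζ, w≠s} O_w(ℓ)`. -/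
theorem eif_path_eq_ancestor_expression [∀ j, Nonempty (X j)]
    (𝓡 : Finset (Pat d)) (h𝓡 : allOnes d ∈ 𝓡)
    (PA : Pat d → Finset (Pat d)) (hG : IsRegularGraph 𝓡 PA)
    (p : (∀ j, X j) → Pat d → ℝ)
    (hpmf : IsJointPMF 𝓡 p) (hpos : MargPos 𝓡 p)
    (hfact : SelOddsFactorizes 𝓡 PA p)
    (θ : (∀ j, X j) → ℝ)
    (Υ : Pat d → Pat d → Finset (List (Pat d)))
    (hΥ : ∀ u v, ∀ Ξ, Ξ ∈ Υ u v ↔ IsPath 𝓡 PA u v Ξ) :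
    ∀ r ∈ 𝓡, r ≠ allOnes d → ∀ (ℓ : ∀ j, X j), ∀ ρ ∈ 𝓡,
      (∑ Ξ ∈ Υ (allOnes d) r,
        (Ξ.map fun s => if s = allOnes d then (0:ℝ) else
          ((∑ ℓ' ∈ univ.filter (fun ℓ' => agree s ℓ ℓ'),
              θ ℓ' * p ℓ' (allOnes d) *
                (Ξ.map fun τ => if s < τ ∧ τ ≠ allOnes d then odds p PA τ ℓ' else 1).prod)
            / obsPA p s ℓ (PA s))
          * ((if ρ = s then (1:ℝ) else 0)
              - odds p PA s ℓ * (if ρ ∈ PA s then (1:ℝ) else 0))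
          * (Ξ.map fun w => if w < s then odds p PA w ℓ else 1).prod).sum)
      = ∑ s ∈ (𝓡.filter fun s => (Υ s r).Nonempty).erase (allOnes d),
          ((∑ ℓ' ∈ univ.filter (fun ℓ' => agree s ℓ ℓ'), θ ℓ' * p ℓ' s) / obsP p s ℓ s)
          * ((if ρ = s then (1:ℝ) else 0)
              - odds p PA s ℓ * (if ρ ∈ PA s then (1:ℝ) else 0))
          * ∑ ζ ∈ Υ s r,
              (ζ.map fun w => if w = s then (1:ℝ) else odds p PA w ℓ).prod :=
  eif_path_eq_ancestor_expression_general 𝓡 h𝓡 PA hG p hpos hfact θ Υ hΥ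
end
end

section
/- Let G be an acyclic pattern graph on a pattern set 𝓡 and let p be a joint pmf with full positivity (p(ℓ, r) > 0 for every ℓ and every r ∈ 𝓡). Then: (1) the selection odds model of p factorizes with respect to G if and only if the pattern mixture model of p factorizes with respect to G; and (2) if p and p' are two joint pmfs with full positivity whose pattern mixture models both factorize with respect to G and which induce the same observed-data distribution (p_r(ℓ, r) = p'_r(ℓ, r) for every ℓ and every r ∈ 𝓡), then p = p'. -/
open Finset

noncomputable section

variable {d : ℕ}


variable {X : Fin d → Type*} [∀ j, Fintype (X j)] [∀ j, DecidableEq (X j)]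

/-- An acyclic pattern graph on `𝓡`: `1_d` is the unique source (it has no parents, every
other pattern has a nonempty parent set inside `𝓡`), and the arrow relation `s ∈ PA(r)`
admits no directed cycle. -/
def IsAcyclicGraph (𝓡 : Finset (Pat d)) (PA : Pat d → Finset (Pat d)) : Prop :=
  PA (allOnes d) = ∅ ∧
    (∀ r ∈ 𝓡, r ≠ allOnes d → (PA r).Nonempty ∧ PA r ⊆ 𝓡) ∧
    ∀ v : Pat d, ¬ Relation.TransGen (fun s t => t ∈ 𝓡 ∧ s ∈ PA t) v v

/-! The two factorizations differ only by the nonzero factor `p_r(ℓ, PA(r))`, so they are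
equivalent. For identification, acyclicity of a finite graph makes the arrow relation
well-founded. At the source `1_d` the observed-data law is the full law, and at any other
pattern the pattern mixture factorization expresses `p(·, r)` through the observed law at `r`
and the values of `p` on the parents, so `p = p'` propagates along the arrows. -/

theorem wellFounded_of_not_transGen_self {α : Type*} [Finite α] {r : α → α → Prop}
    (h : ∀ a, ¬ Relation.TransGen r a a) : WellFounded r :=
  have : IsTrans α (Relation.TransGen r) := ⟨fun _ _ _ => Relation.TransGen.trans⟩
  have : Std.Irrefl (Relation.TransGen r) := ⟨h⟩
  Subrelation.wf Relation.TransGen.single (Finite.wellFounded_of_trans_of_irrefl _)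

theorem IsAcyclicGraph.wellFounded {𝓡 : Finset (Pat d)} {PA : Pat d → Finset (Pat d)}
    (hG : IsAcyclicGraph 𝓡 PA) : WellFounded (fun s t => t ∈ 𝓡 ∧ s ∈ PA t) :=
  wellFounded_of_not_transGen_self hG.2.2

section Observed

variable {𝓡 : Finset (Pat d)} {p : (∀ j, X j) → Pat d → ℝ}

theorem FullPos.obsP_pos (hpos : FullPos 𝓡 p) {s : Pat d} (hs : s ∈ 𝓡) (r : Pat d)
    (ℓ : ∀ j, X j) : 0 < obsP p r ℓ s :=
  sum_pos (fun ℓ' _ => hpos ℓ' s hs) ⟨ℓ, mem_filter.mpr ⟨mem_univ _, fun _ _ => rfl⟩⟩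

theorem FullPos.obsPA_pos (hpos : FullPos 𝓡 p) {A : Finset (Pat d)} (hA : A.Nonempty)
    (hA𝓡 : A ⊆ 𝓡) (r : Pat d) (ℓ : ∀ j, X j) : 0 < obsPA p r ℓ A :=
  sum_pos (fun _ hs => hpos.obsP_pos (hA𝓡 hs) r ℓ) hA

theorem FullPos.obsPA_parents_ne_zero {PA : Pat d → Finset (Pat d)} (hpos : FullPos 𝓡 p)
    (hG : IsAcyclicGraph 𝓡 PA) {r : Pat d} (hr : r ∈ 𝓡) (hr1 : r ≠ allOnes d)
    (ℓ : ∀ j, X j) : obsPA p r ℓ (PA r) ≠ 0 :=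
  have ⟨hne, hsub⟩ := hG.2.1 r hr hr1
  (hpos.obsPA_pos hne hsub r ℓ).ne'

end Observed

theorem obsP_allOnes (p : (∀ j, X j) → Pat d → ℝ) (ℓ : ∀ j, X j) (s : Pat d) :
    obsP p (allOnes d) ℓ s = p ℓ s := by
  have h : univ.filter (fun ℓ' => agree (allOnes d) ℓ ℓ') = {ℓ} := by
    ext ℓ'
    simp [agree, allOnes, funext_iff, eq_comm]
  rw [obsP, h, sum_singleton]

theorem selOddsFactorizes_iff_pmmFactorizes {𝓡 : Finset (Pat d)}
    {PA : Pat d → Finset (Pat d)} {p : (∀ j, X j) → Pat d → ℝ}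
    (hden : ∀ r ∈ 𝓡, r ≠ allOnes d → ∀ ℓ, obsPA p r ℓ (PA r) ≠ 0) :
    SelOddsFactorizes 𝓡 PA p ↔ PMMFactorizes 𝓡 PA p := by
  refine forall₄_congr fun r hr hr1 ℓ => ?_
  rw [odds, ← mul_div_assoc, eq_div_iff (hden r hr hr1 ℓ)]

theorem PMMFactorizes.eq_of_eq_on_parents {𝓡 : Finset (Pat d)} {PA : Pat d → Finset (Pat d)}
    {p p' : (∀ j, X j) → Pat d → ℝ} (hp : PMMFactorizes 𝓡 PA p) (hp' : PMMFactorizes 𝓡 PA p')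
    {r : Pat d} (hr : r ∈ 𝓡) (hr1 : r ≠ allOnes d)
    (hden' : ∀ ℓ, obsPA p' r ℓ (PA r) ≠ 0)
    (hobs : ∀ ℓ, obsP p r ℓ r = obsP p' r ℓ r)
    (hPA : ∀ s ∈ PA r, ∀ ℓ, p ℓ s = p' ℓ s) (ℓ : ∀ j, X j) : p ℓ r = p' ℓ r := by
  have hjoint : jointA p ℓ (PA r) = jointA p' ℓ (PA r) :=
    sum_congr rfl fun s hs => hPA s hs ℓ
  have hobsPA : obsPA p r ℓ (PA r) = obsPA p' r ℓ (PA r) :=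
    sum_congr rfl fun s hs => sum_congr rfl fun ℓ' _ => hPA s hs ℓ'
  have h := hp r hr hr1 ℓ
  rw [hjoint, hobsPA, hobs ℓ, ← hp' r hr hr1 ℓ] at h
  exact mul_right_cancel₀ (hden' ℓ) h

theorem PMMFactorizes.eq_of_obsP_eq {𝓡 : Finset (Pat d)} (h𝓡 : allOnes d ∈ 𝓡)
    {PA : Pat d → Finset (Pat d)} (hG : IsAcyclicGraph 𝓡 PA)
    {p p' : (∀ j, X j) → Pat d → ℝ} (hp : PMMFactorizes 𝓡 PA p) (hp' : PMMFactorizes 𝓡 PA p')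
    (hpos' : FullPos 𝓡 p') (hobs : ∀ r ∈ 𝓡, ∀ ℓ, obsP p r ℓ r = obsP p' r ℓ r) :
    ∀ r ∈ 𝓡, ∀ ℓ, p ℓ r = p' ℓ r := by
  intro r
  induction r using hG.wellFounded.induction with
  | _ r ih =>
    intro hr ℓ
    by_cases hr1 : r = allOnes d
    · subst hr1
      simpa only [obsP_allOnes] using hobs _ h𝓡 ℓ
    · exact hp.eq_of_eq_on_parents hp' hr hr1 (hpos'.obsPA_parents_ne_zero hG hr hr1)
        (hobs r hr) (fun s hs => ih s ⟨hr, hs⟩ ((hG.2.1 r hr hr1).2 hs)) ℓ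

theorem acyclic_pattern_graph_equivalence_and_identification_general
    (𝓡 : Finset (Pat d)) (h𝓡 : allOnes d ∈ 𝓡)
    (PA : Pat d → Finset (Pat d)) (hG : IsAcyclicGraph 𝓡 PA)
    (p p' : (∀ j, X j) → Pat d → ℝ)
    (hpos : FullPos 𝓡 p) (hpos' : FullPos 𝓡 p') :
    (SelOddsFactorizes 𝓡 PA p ↔ PMMFactorizes 𝓡 PA p) ∧
    (PMMFactorizes 𝓡 PA p → PMMFactorizes 𝓡 PA p' →
      (∀ r ∈ 𝓡, ∀ ℓ, obsP p r ℓ r = obsP p' r ℓ r) →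
      ∀ ℓ, ∀ r ∈ 𝓡, p ℓ r = p' ℓ r) :=
  ⟨selOddsFactorizes_iff_pmmFactorizes fun _ hr hr1 => hpos.obsPA_parents_ne_zero hG hr hr1,
    fun hp hp' hobs ℓ r hr => hp.eq_of_obsP_eq h𝓡 hG hp' hpos' hobs r hr ℓ⟩

/-- **Theorem (acyclic pattern graphs).** For an acyclic pattern graph and joint pmfs with
full positivity: (1) the selection odds model factorizes iff the pattern mixture model
factorizes; (2) pattern-mixture factorization identifies the full-data distribution from
the observed-data distribution. -/
theorem acyclic_pattern_graph_equivalence_and_identification [∀ j, Nonempty (X j)]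
    (𝓡 : Finset (Pat d)) (h𝓡 : allOnes d ∈ 𝓡)
    (PA : Pat d → Finset (Pat d)) (hG : IsAcyclicGraph 𝓡 PA)
    (p p' : (∀ j, X j) → Pat d → ℝ)
    (hpmf : IsJointPMF 𝓡 p) (hpmf' : IsJointPMF 𝓡 p')
    (hpos : FullPos 𝓡 p) (hpos' : FullPos 𝓡 p') :
    (SelOddsFactorizes 𝓡 PA p ↔ PMMFactorizes 𝓡 PA p) ∧
    (PMMFactorizes 𝓡 PA p → PMMFactorizes 𝓡 PA p' →
      (∀ r ∈ 𝓡, ∀ ℓ, obsP p r ℓ r = obsP p' r ℓ r) →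
      ∀ ℓ, ∀ r ∈ 𝓡, p ℓ r = p' ℓ r) :=
  acyclic_pattern_graph_equivalence_and_identification_general 𝓡 h𝓡 PA hG p p' hpos hpos'
end
end
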